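/- Let F : T → S be a triangulated functor between triangulated categories closed under small coproducts. Assume F admits a conservative right adjoint G that preserves small coproducts. If T is compactly generated by a set of objects T₀, then S is compactly generated by the set {F(t) : t ∈ T₀}. -/

import Mathlib

open CategoryTheory Limits Pretriangulated

universe v₁ v₂ u₁ u₂

/-- An object `X` of a preadditive category is compact if `Hom(X, -)`
(as an `AddCommGrp`-valued functor) preserves small coproducts. -/
def IsCompactObject {C : Type u₁} [Category.{v₁} C] [Preadditive C] (X : C) : Prop :=
  ∀ J : Type, Nonempty (PreservesColimitsOfShape (Discrete J)
    (preadditiveCoyoneda.obj (Opposite.op X)))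

/-- A set of objects `T₀` compactly generates a (pre)triangulated category `C` if every
object of `T₀` is compact and an object `s` is zero as soon as every morphism
`t⟦n⟧ ⟶ s` with `t ∈ T₀`, `n : ℤ` vanishes. -/
def IsCompactlyGeneratedBy {C : Type u₁} [Category.{v₁} C] [Preadditive C] [HasShift C ℤ]
    (T₀ : Set C) : Prop :=
  (∀ t ∈ T₀, IsCompactObject t) ∧
    ∀ s : C, (∀ t ∈ T₀, ∀ n : ℤ, ∀ φ : (shiftFunctor C n).obj t ⟶ s, φ = 0) → IsZero s


/-! By adjunction `Hom(F t, -)` agrees with `Hom(t, G -)` up to universe lifting, so `F t` is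
compact when `t` is, since `G` preserves coproducts. As `F` commutes with shifts,
`Hom((F t)⟦n⟧, s) ≅ Hom(F (t⟦n⟧), s) ≅ Hom(t⟦n⟧, G s)`; so if the former all vanish then `G s = 0`,
and `s = 0` because `G` is conservative. -/

namespace CategoryTheory

variable {C : Type u₁} {D : Type u₂} [Category.{v₁} C] [Category.{v₂} D]

theorem Functor.isZero_of_isZero_obj [HasZeroMorphisms C] [HasZeroMorphisms D] (G : D ⥤ C)
    [G.PreservesZeroMorphisms] [G.ReflectsIsomorphisms] {X : D} (hX : IsZero (G.obj X)) :
    IsZero X := by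
  have : IsIso (G.map (0 : X ⟶ X)) := hX.isIso hX _
  have : IsIso (0 : X ⟶ X) := isIso_of_reflects_iso _ G
  exact IsZero.of_mono_zero X X

namespace Adjunction

variable [Preadditive C] [Preadditive D] {F : C ⥤ D} {G : D ⥤ C} (adj : F ⊣ G) [F.Additive]

def compPreadditiveCoyonedaObjIso (X : C) :
    preadditiveCoyoneda.obj (Opposite.op (F.obj X)) ⋙ AddCommGrpCat.uliftFunctor.{max v₁ v₂} ≅
      G ⋙ preadditiveCoyoneda.obj (Opposite.op X) ⋙ AddCommGrpCat.uliftFunctor.{max v₁ v₂} :=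
  NatIso.ofComponents
    (fun Y ↦ (AddEquiv.ulift.trans
      ((adj.homAddEquiv X Y).trans AddEquiv.ulift.symm)).toAddCommGrpIso)
    (fun f ↦ by
      ext ⟨x⟩
      exact AddEquiv.ulift.injective (adj.homEquiv_naturality_right x f))

include adj in
theorem isCompactObject_obj (hG : ∀ J : Type, PreservesColimitsOfShape (Discrete J) G)
    {X : C} (hX : IsCompactObject X) : IsCompactObject (F.obj X) := by
  intro J
  have := hG J
  have := (hX J).some
  have := preservesColimitsOfShape_of_natIso (J := Discrete J)
    (adj.compPreadditiveCoyonedaObjIso X).symm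
  exact ⟨preservesColimitsOfShape_of_reflects_of_preserves _
    AddCommGrpCat.uliftFunctor.{max v₁ v₂}⟩

include adj in
theorem eq_zero_of_forall_shift_obj_hom_eq_zero {A : Type*} [AddMonoid A]
    [HasShift C A] [HasShift D A] [F.CommShift A] {X : C} {Y : D} {a : A}
    (h : ∀ φ : (F.obj X)⟦a⟧ ⟶ Y, φ = 0) (ψ : X⟦a⟧ ⟶ G.obj Y) : ψ = 0 := by
  have hψ : (adj.homEquiv _ Y).symm ψ = 0 := by
    simpa using (F.commShiftIso a).hom.app X ≫= h ((F.commShiftIso a).inv.app X ≫ _)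
  simpa using congrArg (adj.homEquiv _ Y) hψ

end Adjunction

end CategoryTheory

theorem compactly_generated_of_conservative_coproduct_preserving_right_adjoint
    {T : Type u₁} {S : Type u₂} [Category.{v₁} T] [Category.{v₂} S]
    [Preadditive T] [Preadditive S] [HasZeroObject T] [HasZeroObject S]
    [HasShift T ℤ] [HasShift S ℤ]
    [∀ n : ℤ, (shiftFunctor T n).Additive] [∀ n : ℤ, (shiftFunctor S n).Additive]
    [Pretriangulated T] [Pretriangulated S]
    [HasCoproducts.{0} T] [HasCoproducts.{0} S]
    (F : T ⥤ S) [F.CommShift ℤ] [F.IsTriangulated]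
    (G : S ⥤ T) (adj : F ⊣ G) [G.ReflectsIsomorphisms]
    (hG : ∀ J : Type, PreservesColimitsOfShape (Discrete J) G)
    (T₀ : Set T) (hT₀ : IsCompactlyGeneratedBy T₀) :
    IsCompactlyGeneratedBy (F.obj '' T₀) := by
  constructor
  · rintro _ ⟨t, ht, rfl⟩
    exact adj.isCompactObject_obj hG (hT₀.1 t ht)
  · intro s hs
    have := adj.right_adjoint_additive
    refine G.isZero_of_isZero_obj (hT₀.2 _ fun t ht n ↦ ?_)
    exact adj.eq_zero_of_forall_shift_obj_hom_eq_zero (hs _ ⟨t, ht, rfl⟩ n)
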